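/- For the delayed problem with optimal state x* given piecewise by: x*(t)=1 on [-2,0], -1+2e^t on (0,1], ((e²+2e⁴-2e²t)e^{-t}-8+(17-2e²)e^t)/8 on (1,2], (2e^{4-t}+4+(-47e^{-2}+17-2e²+16e^{-2}t)e^t)/8 on (2,3], ((-e⁶+e⁴t)e^{-t}+4+(-51e^{-2}+24-2e²+17e^{-2}t-2t)e^t)/8 on (3,4], and optimal control u* given by 0 on [-1,0), (e^{3-t}-e^{1-t}t)/20 on [0,1), (e^{3-t}-1)/20 on [1,3], 0 on (3,4], the cost ∫₀⁴ (x*(t) + 100 u*(t)²) dt equals (23 + e² + 34e⁴ - 2e⁶)/16. -/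

import Mathlib

/-!
On each interval `(k, k + 1)` the running cost `x*(t) + 100 u*(t)²` is a constant plus
quadratic-polynomial multiples of `eᵗ`, `e⁻ᵗ` and `e⁻²ᵗ`, and such terms have explicit
antiderivatives. The break points are null sets, so the branch conventions there do not matter;
integrating piece by piece and writing every `eⁿ` as a power of `e` gives the value.
-/

open Real Set intervalIntegral

theorem exp_ofNat_mul (n : ℕ) [n.AtLeastTwo] (x : ℝ) :
    exp (ofNat(n) * x) = exp x ^ (ofNat(n) : ℕ) := by
  rw [← exp_nat_mul, Nat.cast_ofNat]

theorem exp_ofNat (n : ℕ) [n.AtLeastTwo] : exp ofNat(n) = exp 1 ^ (ofNat(n) : ℕ) := by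
  rw [← exp_ofNat_mul, mul_one]

noncomputable def expQuad (p q r c t : ℝ) : ℝ := (p + q * t + r * t ^ 2) * exp (c * t)

/-- The coefficients `P, Q, R` solve `Q + c P = p`, `2 R + c Q = q`, `c R = r`, so by
`hasDerivAt_expQuad` this is a primitive of `expQuad p q r c` when `c ≠ 0`. -/
noncomputable def expQuadPrimitive (p q r c : ℝ) : ℝ → ℝ :=
  expQuad ((p - (q - 2 * r / c) / c) / c) ((q - 2 * r / c) / c) (r / c) c

@[fun_prop]
theorem continuous_expQuad (p q r c : ℝ) : Continuous (expQuad p q r c) := by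
  unfold expQuad
  fun_prop

theorem hasDerivAt_expQuad (p q r c t : ℝ) :
    HasDerivAt (expQuad p q r c) (expQuad (q + c * p) (2 * r + c * q) (c * r) c t) t := by
  have hpoly : HasDerivAt (fun s => p + q * s + r * s ^ 2) (q + 2 * r * t) t :=
    ((((hasDerivAt_id t).const_mul q).const_add p).add
      ((hasDerivAt_pow 2 t).const_mul r)).congr_deriv (by simp; ring)
  have hexp : HasDerivAt (fun s => exp (c * s)) (exp (c * t) * c) t :=
    ((hasDerivAt_id t).const_mul c).exp.congr_deriv (by simp)
  refine (hpoly.mul hexp).congr_deriv ?_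
  simp only [expQuad]
  ring

theorem hasDerivAt_expQuadPrimitive {c : ℝ} (hc : c ≠ 0) (p q r t : ℝ) :
    HasDerivAt (expQuadPrimitive p q r c) (expQuad p q r c t) t := by
  refine (hasDerivAt_expQuad _ _ _ c t).congr_deriv ?_
  simp only [expQuad]
  field_simp
  ring

theorem integral_add_expQuad {f : ℝ → ℝ} {a b c : ℝ}
    (hf : IntervalIntegrable f MeasureTheory.volume a b) (hc : c ≠ 0) (p q r : ℝ) :
    ∫ t in a..b, (f t + expQuad p q r c t)
      = (∫ t in a..b, f t) + (expQuadPrimitive p q r c b - expQuadPrimitive p q r c a) := by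
  have hint := (continuous_expQuad p q r c).intervalIntegrable (μ := MeasureTheory.volume) a b
  rw [integral_add hf hint,
    integral_eq_sub_of_hasDerivAt (fun t _ => hasDerivAt_expQuadPrimitive hc p q r t) hint]

theorem intervalIntegrable_of_eqOn_Ioo {f g : ℝ → ℝ} {a b : ℝ} (hab : a ≤ b)
    (h : EqOn f g (Ioo a b)) (hg : Continuous g) : IntervalIntegrable f MeasureTheory.volume a b :=
  (hg.intervalIntegrable a b).congr_uIoo (uIoo_of_le hab ▸ h.symm)

noncomputable def optimalState (t : ℝ) : ℝ :=
  if t ≤ 0 then (1:ℝ)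
  else if t ≤ 1 then -1 + 2 * exp t
  else if t ≤ 2 then
    ((exp 2 + 2 * exp 4 - 2 * exp 2 * t) * exp (-t) - 8 + (17 - 2 * exp 2) * exp t) / 8
  else if t ≤ 3 then
    (2 * exp (4 - t) + 4
      + (-47 * exp (-2 : ℝ) + 17 - 2 * exp 2 + 16 * exp (-2 : ℝ) * t) * exp t) / 8
  else
    ((-exp 6 + exp 4 * t) * exp (-t) + 4
      + (-51 * exp (-2 : ℝ) + 24 - 2 * exp 2 + 17 * exp (-2 : ℝ) * t - 2 * t) * exp t) / 8

noncomputable def optimalControl (t : ℝ) : ℝ :=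
  if t < 0 then (0:ℝ)
  else if t < 1 then (exp (3 - t) - exp (1 - t) * t) / 20
  else if t ≤ 3 then (exp (3 - t) - 1) / 20
  else 0

noncomputable def runningCost (t : ℝ) : ℝ := optimalState t + 100 * optimalControl t ^ 2

theorem runningCost_eqOn_Ioo_zero_one :
    EqOn runningCost
      (fun t => -1 + expQuad 2 0 0 1 t + expQuad (exp 6 / 4) (-exp 4 / 2) (exp 2 / 4) (-2) t)
      (Ioo 0 1) := by
  rintro t ⟨h0, h1⟩
  simp only [runningCost, optimalState, optimalControl, expQuad, if_neg h0.not_ge, if_pos h1.le,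
    if_neg h0.not_gt, if_pos h1]
  simp only [exp_sub, exp_neg, neg_mul, one_mul, exp_ofNat_mul, exp_ofNat]
  field_simp
  ring

theorem runningCost_eqOn_Ioo_one_two :
    EqOn runningCost
      (fun t => -3 / 4 + expQuad ((17 - 2 * exp 2) / 8) 0 0 1 t
        + expQuad ((exp 2 + 2 * exp 4) / 8 - exp 3 / 2) (-exp 2 / 4) 0 (-1) t
        + expQuad (exp 6 / 4) 0 0 (-2) t)
      (Ioo 1 2) := by
  rintro t ⟨h1, h2⟩
  simp only [runningCost, optimalState, optimalControl, expQuad, if_neg (by linarith : ¬ t ≤ 0),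
    if_neg h1.not_ge, if_pos h2.le, if_neg (by linarith : ¬ t < 0), if_neg h1.not_gt,
    if_pos (by linarith : t ≤ 3)]
  simp only [exp_sub, exp_neg, neg_mul, one_mul, exp_ofNat_mul, exp_ofNat]
  field_simp
  ring

theorem runningCost_eqOn_Ioo_two_three :
    EqOn runningCost
      (fun t => 3 / 4 + expQuad ((-47 * exp (-2) + 17 - 2 * exp 2) / 8) (2 * exp (-2)) 0 1 t
        + expQuad (exp 4 / 4 - exp 3 / 2) 0 0 (-1) t
        + expQuad (exp 6 / 4) 0 0 (-2) t)
      (Ioo 2 3) := by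
  rintro t ⟨h2, h3⟩
  simp only [runningCost, optimalState, optimalControl, expQuad, if_neg (by linarith : ¬ t ≤ 0),
    if_neg (by linarith : ¬ t ≤ 1), if_neg h2.not_ge, if_pos h3.le, if_neg (by linarith : ¬ t < 0),
    if_neg (by linarith : ¬ t < 1)]
  simp only [exp_sub, exp_neg, neg_mul, one_mul, exp_ofNat_mul, exp_ofNat]
  field_simp
  ring

theorem runningCost_eqOn_Ioo_three_four :
    EqOn runningCost
      (fun t => 1 / 2
        + expQuad ((-51 * exp (-2) + 24 - 2 * exp 2) / 8) ((17 * exp (-2) - 2) / 8) 0 1 t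
        + expQuad (-exp 6 / 8) (exp 4 / 8) 0 (-1) t)
      (Ioo 3 4) := by
  rintro t ⟨h3, -⟩
  simp only [runningCost, optimalState, optimalControl, expQuad, if_neg (by linarith : ¬ t ≤ 0),
    if_neg (by linarith : ¬ t ≤ 1), if_neg (by linarith : ¬ t ≤ 2), if_neg h3.not_ge,
    if_neg (by linarith : ¬ t < 0), if_neg (by linarith : ¬ t < 1)]
  simp only [exp_neg, neg_mul, one_mul, exp_ofNat]
  field_simp
  ring

open Real in
theorem minimal_cost_delayed_linear :
    (∫ t in (0:ℝ)..4,
      ((if t ≤ 0 then (1:ℝ)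
        else if t ≤ 1 then -1 + 2 * exp t
        else if t ≤ 2 then
          ((exp 2 + 2 * exp 4 - 2 * exp 2 * t) * exp (-t) - 8 + (17 - 2 * exp 2) * exp t) / 8
        else if t ≤ 3 then
          (2 * exp (4 - t) + 4
            + (-47 * exp (-2 : ℝ) + 17 - 2 * exp 2 + 16 * exp (-2 : ℝ) * t) * exp t) / 8
        else
          ((-exp 6 + exp 4 * t) * exp (-t) + 4
            + (-51 * exp (-2 : ℝ) + 24 - 2 * exp 2 + 17 * exp (-2 : ℝ) * t - 2 * t) * exp t) / 8)
      + 100 * (if t < 0 then (0:ℝ)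
          else if t < 1 then (exp (3 - t) - exp (1 - t) * t) / 20
          else if t ≤ 3 then (exp (3 - t) - 1) / 20
          else 0) ^ 2))
    = (23 + Real.exp 2 + 34 * Real.exp 4 - 2 * Real.exp 6) / 16 := by
  show ∫ t in (0:ℝ)..4, runningCost t = _
  have i₁ := intervalIntegrable_of_eqOn_Ioo zero_le_one runningCost_eqOn_Ioo_zero_one (by fun_prop)
  have i₂ := intervalIntegrable_of_eqOn_Ioo one_le_two runningCost_eqOn_Ioo_one_two (by fun_prop)
  have i₃ := intervalIntegrable_of_eqOn_Ioo (by norm_num) runningCost_eqOn_Ioo_two_three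
    (by fun_prop)
  have i₄ := intervalIntegrable_of_eqOn_Ioo (by norm_num) runningCost_eqOn_Ioo_three_four
    (by fun_prop)
  rw [← integral_add_adjacent_intervals ((i₁.trans i₂).trans i₃) i₄,
    ← integral_add_adjacent_intervals (i₁.trans i₂) i₃, ← integral_add_adjacent_intervals i₁ i₂,
    integral_congr_Ioo_of_le zero_le_one runningCost_eqOn_Ioo_zero_one,
    integral_congr_Ioo_of_le one_le_two runningCost_eqOn_Ioo_one_two,
    integral_congr_Ioo_of_le (by norm_num) runningCost_eqOn_Ioo_two_three,
    integral_congr_Ioo_of_le (by norm_num) runningCost_eqOn_Ioo_three_four]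
  simp (disch := first | exact Continuous.intervalIntegrable (by fun_prop) _ _ | norm_num) only
    [integral_add_expQuad, integral_const, smul_eq_mul]
  simp only [expQuadPrimitive, expQuad]
  norm_num
  simp only [exp_neg, exp_ofNat]
  field_simp
  ring
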